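/- Let N be an even positive integer with N ≥ 4 and let ν be a real root of U'_{N+1}(x). For k = 1,…,N let z_k(ν) = (−1)^{k−1}( U_{k−1}(ν)U_k(ν) − U_{N−k}(ν)U_{N−k+1}(ν) + ((N+1−2k)/(N+1)) U_N(ν)U_{N+1}(ν) ). Then for every k = 1,…,N/2 − 1, z_{k+1}(ν) − z_k(ν) = (−1)^k · 2ν · U_{N+1}(ν) · ( ((N−2k)/(N+2))·U_{N+1}(ν) − U_{N−2k−1}(ν) ). -/

import Mathlib

/-!
On `x = cos t` one has `U_n(x) sin t = sin((n+1)t)`, and the addition formula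
`U_m U_n - U_{m-1} U_{n-1} = U_{m+n}` yields the analogue
`U_a² - U_b² = U_{a+b+1} U_{a-b-1}` of `sin² A - sin² B = sin(A+B) sin(A-B)`.
By the three-term recurrence, `z_{k+1} - z_k` is `±2` times
`x (U_k² - U_{N-k}²) + (N-2k)/(N+1) · U_N U_{N+1}`; the factorisation turns the first part into
`-x U_{N+1} U_{N-2k-1}`, and at a critical point `ν` of `U_{N+1}` the differential equation
`(1 - x²) U'_n = (n+1) U_{n-1} - n x U_n` gives `(N+2) U_N(ν) = (N+1) ν U_{N+1}(ν)`.
-/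

/-- Evaluation of the Chebyshev polynomial of the second kind. -/
noncomputable def Ucheb (n : ℤ) (x : ℝ) : ℝ := (Polynomial.Chebyshev.U ℝ n).eval x

/-- Evaluation of the derivative of the Chebyshev polynomial of the second kind. -/
noncomputable def Ucheb' (n : ℤ) (x : ℝ) : ℝ :=
  (Polynomial.derivative (Polynomial.Chebyshev.U ℝ n)).eval x

/-- The k-th coordinate (1-based) of the vector Z(x). -/
noncomputable def zCoord (N k : ℕ) (x : ℝ) : ℝ :=
  (-1 : ℝ) ^ (k - 1) *
    (Ucheb ((k : ℤ) - 1) x * Ucheb (k : ℤ) x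
      - Ucheb ((N : ℤ) - k) x * Ucheb ((N : ℤ) - k + 1) x
      + (((N : ℝ) + 1 - 2 * k) / ((N : ℝ) + 1)) * Ucheb (N : ℤ) x * Ucheb ((N : ℤ) + 1) x)

open Polynomial

namespace Polynomial.Chebyshev

variable {R : Type*} [CommRing R]

theorem U_mul_U_sub_U_mul_U (m n : ℤ) :
    U R m * U R n - U R (m - 1) * U R (n - 1) = U R (m + n) := by
  have shift : ∀ m n : ℤ, U R m * U R (n + 1) - U R (m - 1) * U R n
      = U R (m + 1) * U R n - U R m * U R (n - 1) := fun m n => by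
    linear_combination U R m * U_add_one R n - U R n * U_add_one R m
  -- by `shift`, the left side depends only on `m + n`
  induction m using Int.induction_on generalizing n with
  | zero => simp
  | succ m ih => linear_combination (norm := ring_nf) ih (n + 1) - shift m n
  | pred m ih => linear_combination (norm := ring_nf) ih (n - 1) + shift (-m - 1) (n - 1)

theorem U_sq_sub_U_add_one_mul_U_sub_one (n : ℤ) :
    U R n ^ 2 - U R (n + 1) * U R (n - 1) = 1 := by
  have h := U_mul_U_sub_U_mul_U (R := R) (n + 1) (-n - 1)
  rw [U_neg_sub_one, show -n - 1 - 1 = -n - 2 by ring, U_neg_sub_two] at h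
  linear_combination (norm := ring_nf) h + U_zero R

theorem U_sq_sub_U_sq (a b : ℤ) :
    U R a ^ 2 - U R b ^ 2 = U R (a + b + 1) * U R (a - b - 1) := by
  have hsum := U_mul_U_sub_U_mul_U (R := R) (a + 1) b
  have hdiff := U_mul_U_sub_U_mul_U (R := R) a (-b - 1)
  rw [U_neg_sub_one, show -b - 1 - 1 = -b - 2 by ring, U_neg_sub_two] at hdiff
  -- expand both factors by the addition formula; Cassini's identity at `a` and `b` collapses them
  linear_combination (norm := ring_nf)
    (U R (a - 1) * U R b - U R a * U R (b - 1)) * hsum + U R (a + b + 1) * hdiff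
    + U R b ^ 2 * U_sq_sub_U_add_one_mul_U_sub_one (R := R) a
    - U R a ^ 2 * U_sq_sub_U_add_one_mul_U_sub_one (R := R) b
    + U R a * U R b * U R (b - 1) * U_add_one R a - U R a ^ 2 * U R (b - 1) * U_add_one R b

theorem one_sub_X_sq_mul_derivative_U_eq_poly_in_U (n : ℤ) :
    (1 - X ^ 2) * derivative (U R n)
      = ((n : R[X]) + 1) * U R (n - 1) - (n : R[X]) * X * U R n := by
  linear_combination (norm := ring_nf) add_one_mul_T_eq_poly_in_U (R := R) n
    - ((n : R[X]) + 1) * (T_eq_U_sub_X_mul_U R (n + 1) + U_add_one R n)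

theorem add_two_mul_U_eval_eq_of_derivative_U_eval_eq_zero {n : ℤ} {x : R}
    (h : (derivative (U R (n + 1))).eval x = 0) :
    ((n : R) + 2) * (U R n).eval x = ((n : R) + 1) * x * (U R (n + 1)).eval x := by
  have hx := congrArg (eval x) (one_sub_X_sq_mul_derivative_U_eq_poly_in_U (R := R) (n + 1))
  simp only [eval_mul, eval_sub, eval_add, eval_one, eval_pow, eval_X, eval_intCast, h,
    add_sub_cancel_right, mul_zero, Int.cast_add, Int.cast_one] at hx
  linear_combination -hx

end Polynomial.Chebyshev

open Polynomial.Chebyshev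

theorem zCoord_succ_sub_zCoord (N : ℕ) {k : ℕ} (hk : 1 ≤ k) (x : ℝ) :
    zCoord N (k + 1) x - zCoord N k x
      = (-1 : ℝ) ^ k * 2 *
          (((N : ℝ) - 2 * k) / ((N : ℝ) + 1) * Ucheb N x * Ucheb ((N : ℤ) + 1) x
            - x * Ucheb ((N : ℤ) + 1) x * Ucheb ((N : ℤ) - 2 * k - 1) x) := by
  have hsign : (-1 : ℝ) ^ (k - 1) = -(-1 : ℝ) ^ k := by
    obtain ⟨j, rfl⟩ := Nat.exists_eq_add_of_le' hk
    simp [pow_succ]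
  have hsq := congrArg (eval x) (U_sq_sub_U_sq (R := ℝ) k (N - k))
  rw [show (k : ℤ) + (N - k) + 1 = N + 1 by ring,
    show (k : ℤ) - (N - k) - 1 = -(N - 2 * k - 1) - 2 by ring, U_neg_sub_two] at hsq
  have hk_rec := congrArg (eval x) (U_add_one ℝ k)
  have hNk_rec := congrArg (eval x) (U_add_one ℝ (N - k))
  simp only [eval_sub, eval_mul, eval_pow, eval_neg, eval_X, eval_ofNat] at hsq hk_rec hNk_rec
  simp only [zCoord, Ucheb, Nat.add_sub_cancel, hsign]
  push_cast
  rw [show (N : ℤ) - (k + 1) + 1 = N - k by ring, show (N : ℤ) - (k + 1) = N - k - 1 by ring,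
    show (k : ℤ) + 1 - 1 = k by ring]
  linear_combination
    (-1 : ℝ) ^ k * (eval x (U ℝ k) * hk_rec - eval x (U ℝ (N - k)) * hNk_rec + 2 * x * hsq)

theorem stmt12_general (N : ℕ)
    (ν : ℝ) (hνroot : Ucheb' (N + 1) ν = 0) :
    ∀ k : ℕ, 1 ≤ k → k ≤ N / 2 - 1 →
      zCoord N (k + 1) ν - zCoord N k ν
        = (-1 : ℝ) ^ k * 2 * ν * Ucheb ((N : ℤ) + 1) ν *
            ((((N : ℝ) - 2 * k) / ((N : ℝ) + 2)) * Ucheb ((N : ℤ) + 1) ν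
              - Ucheb ((N : ℤ) - 2 * k - 1) ν) := by
  intro k hk _
  have hcrit := add_two_mul_U_eval_eq_of_derivative_U_eval_eq_zero (n := (N : ℤ)) hνroot
  push_cast at hcrit
  have hUN : ((N : ℝ) - 2 * k) / ((N : ℝ) + 1) * Ucheb N ν
      = ν * (((N : ℝ) - 2 * k) / ((N : ℝ) + 2)) * Ucheb ((N : ℤ) + 1) ν := by
    unfold Ucheb
    field_simp
    linear_combination ((N : ℝ) - 2 * k) * hcrit
  rw [zCoord_succ_sub_zCoord N hk]
  linear_combination (-1 : ℝ) ^ k * 2 * Ucheb ((N : ℤ) + 1) ν * hUN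

theorem stmt12 (N : ℕ) (hN : 4 ≤ N) (hNeven : Even N)
    (ν : ℝ) (hνroot : Ucheb' (N + 1) ν = 0) :
    ∀ k : ℕ, 1 ≤ k → k ≤ N / 2 - 1 →
      zCoord N (k + 1) ν - zCoord N k ν
        = (-1 : ℝ) ^ k * 2 * ν * Ucheb ((N : ℤ) + 1) ν *
            ((((N : ℝ) - 2 * k) / ((N : ℝ) + 2)) * Ucheb ((N : ℤ) + 1) ν
              - Ucheb ((N : ℤ) - 2 * k - 1) ν) :=
  stmt12_general N ν hνroot
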